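/- arXiv:2407.07846 — 2 statements merged into one kernel-verified Lean document; each statement's English description precedes it below -/
import Mathlib

section
/- Let P and Q be Pauli operators with P² = Q² = I, and angles θ₁, θ₂ with θ₁ ≢ 0 (mod 2π) and θ₂ ≢ 0 (mod 2π). Then R_P(θ₁) and R_Q(θ₂) commute up to a global phase if and only if P commutes with Q, or (θ₁ ≡ π (mod 2π) and θ₂ ≡ π (mod 2π)). -/
open Matrix Finset

noncomputable def pauliMat : Fin 4 → Matrix (Fin 2) (Fin 2) ℂ
  | 0 => 1
  | 1 => !![0, 1; 1, 0]
  | 2 => !![0, -Complex.I; Complex.I, 0]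
  | 3 => !![1, 0; 0, -1]

noncomputable def pauliTensor {n : ℕ} (f : Fin n → Fin 4) :
    Matrix (Fin n → Fin 2) (Fin n → Fin 2) ℂ :=
  fun i j => ∏ k, pauliMat (f k) (i k) (j k)

def IsPauliOp {n : ℕ} (P : Matrix (Fin n → Fin 2) (Fin n → Fin 2) ℂ) : Prop :=
  ∃ (s : ℂ) (f : Fin n → Fin 4), (s = 1 ∨ s = -1) ∧ P = s • pauliTensor f

noncomputable def pauliRot {n : ℕ} (P : Matrix (Fin n → Fin 2) (Fin n → Fin 2) ℂ) (θ : ℝ) :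
    Matrix (Fin n → Fin 2) (Fin n → Fin 2) ℂ :=
  NormedSpace.exp ((-(θ / 2 : ℂ) * Complex.I) • P)

/-!
For an involution `P` the exponential series splits into its even and odd parts, so
`R_P(θ) = cos(θ/2) - i sin(θ/2) P`. Pauli operators commute or anticommute, and if they commute
so do the rotations. If `P` and `Q` are anticommuting involutions, then `1, P, Q, PQ` are linearly
independent (conjugating by `P` or `Q` flips the signs of two of them), and comparing coefficients
in `R_P R_Q = c R_Q R_P` gives `(1 - c) cos sin = 0` twice and `(1 + c) sin sin = 0`. As the sines
do not vanish, `c = -1` and both cosines vanish.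
-/

section Involution

open scoped Nat

variable {A : Type*} [Ring A] [Algebra ℂ A] [TopologicalSpace A] [IsTopologicalRing A]
  [ContinuousSMul ℂ A] [T2Space A]

theorem exp_smul_of_mul_self_eq_one {M : A} (hM : M * M = 1) (z : ℂ) :
    NormedSpace.exp (z • M) = Complex.cosh z • (1 : A) + Complex.sinh z • M := by
  have hsq : (z • M) ^ 2 = (z ^ 2) • (1 : A) := by rw [sq, smul_mul_smul_comm, hM, sq]
  have heven : ∀ k : ℕ, ((2 * k)! : ℂ)⁻¹ • (z • M) ^ (2 * k)
      = (z ^ (2 * k) / (2 * k)!) • (1 : A) := by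
    intro k
    rw [pow_mul, hsq, smul_pow, one_pow, smul_smul, ← pow_mul, inv_mul_eq_div]
  have hodd : ∀ k : ℕ, ((2 * k + 1)! : ℂ)⁻¹ • (z • M) ^ (2 * k + 1)
      = (z ^ (2 * k + 1) / (2 * k + 1)!) • M := by
    intro k
    rw [pow_succ, pow_mul, hsq, smul_pow, one_pow, smul_mul_smul_comm, one_mul, smul_smul,
      ← pow_mul, ← pow_succ, inv_mul_eq_div]
  rw [NormedSpace.exp_eq_tsum ℂ]
  refine HasSum.tsum_eq (HasSum.even_add_odd ?_ ?_)
  · simpa only [heven] using (Complex.hasSum_cosh z).smul_const (1 : A)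
  · simpa only [hodd] using (Complex.hasSum_sinh z).smul_const M

end Involution

theorem not_commute_of_anticommute {A : Type*} (K : Type*) [Ring A] [Nontrivial A] [Field K]
    [NeZero (2 : K)] [Algebra K A] {P Q : A} (hP : P * P = 1) (hQ : Q * Q = 1)
    (hPQ : P * Q = -(Q * P)) : ¬ Commute P Q := by
  intro hcomm
  have hQP : Q * P = 0 := by
    refine (smul_eq_zero.mp (?_ : (2 : K) • (Q * P) = 0)).resolve_left two_ne_zero
    rw [two_smul]
    nth_rewrite 1 [← hcomm.eq]
    rw [hPQ, neg_add_cancel]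
  apply one_ne_zero (α := A)
  calc (1 : A) = Q * P * (P * Q) := by rw [mul_assoc, ← mul_assoc P, hP, one_mul, hQ]
    _ = 0 := by rw [hQP, zero_mul]

section Anticommute

variable {K A : Type*} [Field K] [NeZero (2 : K)] [Ring A] [Nontrivial A] [Algebra K A]
  {P Q : A}

theorem linearIndependent_one_of_anticommute (hP : P * P = 1) (hQ : Q * Q = 1)
    (hPQ : P * Q = -(Q * P)) : LinearIndependent K ![1, Q] := by
  refine LinearIndependent.pair_iff.mpr fun a b h => ?_
  have hconj : a • (1 : A) - b • Q = 0 := by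
    have : P * (a • 1 + b • Q) * P = a • (1 : A) - b • Q := by
      simp only [mul_add, add_mul, mul_smul_comm, smul_mul_assoc, mul_one, hPQ, neg_mul,
        mul_assoc, hP, sub_eq_add_neg, smul_neg]
    rw [← this, h, mul_zero, zero_mul]
  have ha : a = 0 := by
    have : (2 * a) • (1 : A) = 0 := by
      rw [two_mul, add_smul]; linear_combination (norm := module) h + hconj
    exact (mul_eq_zero.mp ((smul_eq_zero.mp this).resolve_right one_ne_zero)).resolve_left
      two_ne_zero
  refine ⟨ha, ?_⟩
  have hbQ : b • Q = 0 := by simpa [ha] using h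
  have : b • (1 : A) = 0 := by rw [← hQ, ← smul_mul_assoc, hbQ, zero_mul]
  exact (smul_eq_zero.mp this).resolve_right one_ne_zero

theorem linearIndependent_one_mul_of_anticommute (hP : P * P = 1) (hQ : Q * Q = 1)
    (hPQ : P * Q = -(Q * P)) : LinearIndependent K ![1, P, Q, P * Q] := by
  have hpair := linearIndependent_one_of_anticommute (K := K) hP hQ hPQ
  rw [LinearIndependent.pair_iff] at hpair
  refine Fintype.linearIndependent_iff.mpr fun g h => ?_
  simp only [Fin.sum_univ_four, Matrix.cons_val] at h
  have hQP : Q * P = -(P * Q) := by rw [hPQ, neg_neg]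
  have hQPQ : Q * (P * Q) = -P := by rw [← mul_assoc, hQP, neg_mul, mul_assoc, hQ, mul_one]
  have hPQQ : P * Q * Q = P := by rw [mul_assoc, hQ, mul_one]
  have hanti : (2 * g 2) • (1 : A) + (2 * g 0) • Q = 0 := by
    have : Q * (g 0 • 1 + g 1 • P + g 2 • Q + g 3 • (P * Q))
        + (g 0 • 1 + g 1 • P + g 2 • Q + g 3 • (P * Q)) * Q
        = (2 * g 2) • (1 : A) + (2 * g 0) • Q := by
      simp only [mul_add, add_mul, mul_smul_comm, smul_mul_assoc, mul_one, one_mul, hQ, hQP,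
        hQPQ, hPQQ]
      module
    rw [← this, h, mul_zero, zero_mul, add_zero]
  obtain ⟨h2, h0⟩ := hpair _ _ hanti
  have h0 : g 0 = 0 := (mul_eq_zero.mp h0).resolve_left two_ne_zero
  have h2 : g 2 = 0 := (mul_eq_zero.mp h2).resolve_left two_ne_zero
  have hmulP : g 1 • (1 : A) + g 3 • Q = 0 := by
    simpa only [h0, h2, mul_add, mul_smul_comm, zero_smul, mul_zero, zero_add, add_zero,
      ← mul_assoc, hP, one_mul] using congrArg (P * ·) h
  obtain ⟨h1, h3⟩ := hpair _ _ hmulP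
  intro i
  fin_cases i <;> assumption

theorem smul_one_add_smul_mul_eq_smul_mul_iff (hP : P * P = 1) (hQ : Q * Q = 1)
    (hPQ : P * Q = -(Q * P)) {a b a' b' : K} (hb : b ≠ 0) (hb' : b' ≠ 0) (c : K) :
    (a • (1 : A) + b • P) * (a' • 1 + b' • Q) = c • ((a' • 1 + b' • Q) * (a • 1 + b • P)) ↔
      c = -1 ∧ a = 0 ∧ a' = 0 := by
  have hPQ_expand : (a • (1 : A) + b • P) * (a' • 1 + b' • Q)
      = (a * a') • (1 : A) + (b * a') • P + (a * b') • Q + (b * b') • (P * Q) := by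
    simp only [mul_add, add_mul, smul_mul_smul_comm, one_mul, mul_one]
    module
  have hQP_expand : (a' • (1 : A) + b' • Q) * (a • 1 + b • P)
      = (a * a') • (1 : A) + (b * a') • P + (a * b') • Q - (b * b') • (P * Q) := by
    simp only [mul_add, add_mul, smul_mul_smul_comm, one_mul, mul_one, hPQ]
    module
  rw [hPQ_expand, hQP_expand]
  constructor
  · intro h
    have hcoeff := linearIndependent_one_mul_of_anticommute (K := K) hP hQ hPQ
    rw [Fintype.linearIndependent_iff] at hcoeff
    have hzero := hcoeff
      ![(1 - c) * (a * a'), (1 - c) * (b * a'), (1 - c) * (a * b'), (1 + c) * (b * b')]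
      (by simp only [Fin.sum_univ_four, Matrix.cons_val]; linear_combination (norm := module) h)
    have hba' : (1 - c) * (b * a') = 0 := hzero 1
    have hab' : (1 - c) * (a * b') = 0 := hzero 2
    have hbb' : (1 + c) * (b * b') = 0 := hzero 3
    obtain rfl : c = -1 := by
      simpa [hb, hb', add_eq_zero_iff_eq_neg'] using hbb'
    norm_num [hb, hb', two_ne_zero] at hba' hab'
    exact ⟨rfl, hab', hba'⟩
  · rintro ⟨rfl, rfl, rfl⟩
    module

end Anticommute

theorem pauliRot_eq_of_mul_self_eq_one {n : ℕ} {P : Matrix (Fin n → Fin 2) (Fin n → Fin 2) ℂ}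
    (hP : P * P = 1) (θ : ℝ) :
    pauliRot P θ = Complex.cos (θ / 2) • 1 + (-Complex.sin (θ / 2) * Complex.I) • P := by
  rw [pauliRot, exp_smul_of_mul_self_eq_one hP, neg_mul, Complex.cosh_neg, Complex.sinh_neg,
    Complex.cosh_mul_I, Complex.sinh_mul_I, neg_mul]

theorem Complex.cos_ofReal_div_two_eq_zero_iff (θ : ℝ) :
    Complex.cos (θ / 2) = 0 ↔ ∃ k : ℤ, θ = Real.pi + 2 * Real.pi * k := by
  rw [Complex.cos_eq_zero_iff]
  refine exists_congr fun k => ?_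
  rw [← Complex.ofReal_inj]
  push_cast
  exact ⟨fun h => by linear_combination 2 * h, fun h => by linear_combination h / 2⟩

theorem Complex.sin_ofReal_div_two_ne_zero {θ : ℝ} (hθ : ¬ ∃ k : ℤ, θ = 2 * Real.pi * k) :
    Complex.sin (θ / 2) ≠ 0 := by
  rw [Ne, Complex.sin_eq_zero_iff]
  rintro ⟨k, hk⟩
  exact hθ ⟨k, by exact_mod_cast (by linear_combination 2 * hk : (θ : ℂ) = 2 * Real.pi * k)⟩

noncomputable def pauliSign (a b : Fin 4) : ℂ :=
  if a = 0 ∨ b = 0 ∨ a = b then 1 else -1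

theorem pauliSign_eq_one_or_eq_neg_one (a b : Fin 4) : pauliSign a b = 1 ∨ pauliSign a b = -1 := by
  unfold pauliSign; split <;> simp

theorem pauliMat_mul_comm (a b : Fin 4) :
    pauliMat a * pauliMat b = pauliSign a b • (pauliMat b * pauliMat a) := by
  fin_cases a <;> fin_cases b <;>
    refine Matrix.ext fun i j => ?_ <;>
    fin_cases i <;> fin_cases j <;>
    norm_num [pauliMat, pauliSign, Matrix.mul_apply, Fin.sum_univ_two, Complex.ext_iff]

theorem pauliTensor_mul_apply {n : ℕ} (f g : Fin n → Fin 4) (i j : Fin n → Fin 2) :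
    (pauliTensor f * pauliTensor g) i j = ∏ k, (pauliMat (f k) * pauliMat (g k)) (i k) (j k) := by
  simp only [Matrix.mul_apply, pauliTensor, ← Finset.prod_mul_distrib]
  rw [Fintype.prod_sum]

theorem pauliTensor_mul_comm {n : ℕ} (f g : Fin n → Fin 4) :
    pauliTensor f * pauliTensor g
      = (∏ k, pauliSign (f k) (g k)) • (pauliTensor g * pauliTensor f) := by
  ext i j
  rw [Matrix.smul_apply, pauliTensor_mul_apply, pauliTensor_mul_apply, smul_eq_mul,
    ← Finset.prod_mul_distrib]
  refine Finset.prod_congr rfl fun k _ => ?_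
  rw [pauliMat_mul_comm, Matrix.smul_apply, smul_eq_mul]

theorem IsPauliOp.commute_or_anticommute {n : ℕ}
    {P Q : Matrix (Fin n → Fin 2) (Fin n → Fin 2) ℂ} (hP : IsPauliOp P) (hQ : IsPauliOp Q) :
    Commute P Q ∨ P * Q = -(Q * P) := by
  obtain ⟨s, f, -, rfl⟩ := hP
  obtain ⟨t, g, -, rfl⟩ := hQ
  have hsign : ∏ k, pauliSign (f k) (g k) = 1 ∨ ∏ k, pauliSign (f k) (g k) = -1 := by
    refine Finset.prod_induction _ (fun x => x = 1 ∨ x = -1) ?_ (Or.inl rfl)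
      fun k _ => pauliSign_eq_one_or_eq_neg_one (f k) (g k)
    rintro x y (rfl | rfl) (rfl | rfl) <;> norm_num
  have hmul : s • pauliTensor f * t • pauliTensor g
      = (∏ k, pauliSign (f k) (g k)) • (t • pauliTensor g * s • pauliTensor f) := by
    rw [smul_mul_smul_comm, smul_mul_smul_comm, pauliTensor_mul_comm, smul_comm, mul_comm s t]
  rcases hsign with hsign | hsign
  · exact Or.inl (by rw [Commute, SemiconjBy, hmul, hsign, one_smul])
  · exact Or.inr (by rw [hmul, hsign, neg_one_smul])

theorem stmt7 {n : ℕ} (P Q : Matrix (Fin n → Fin 2) (Fin n → Fin 2) ℂ)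
    (hP : IsPauliOp P) (hQ : IsPauliOp Q) (hP2 : P * P = 1) (hQ2 : Q * Q = 1)
    (θ₁ θ₂ : ℝ) (hθ₁ : ¬ ∃ k : ℤ, θ₁ = 2 * Real.pi * k) (hθ₂ : ¬ ∃ k : ℤ, θ₂ = 2 * Real.pi * k) :
    (∃ c : ℂ, ‖c‖ = 1 ∧
        pauliRot P θ₁ * pauliRot Q θ₂ = c • (pauliRot Q θ₂ * pauliRot P θ₁)) ↔
      (P * Q = Q * P ∨
        ((∃ k : ℤ, θ₁ = Real.pi + 2 * Real.pi * k) ∧ (∃ k : ℤ, θ₂ = Real.pi + 2 * Real.pi * k))) := by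
  rw [pauliRot_eq_of_mul_self_eq_one hP2, pauliRot_eq_of_mul_self_eq_one hQ2]
  rcases hP.commute_or_anticommute hQ with hcomm | hanti
  · refine iff_of_true ⟨1, norm_one, ?_⟩ (Or.inl hcomm.eq)
    rw [one_smul]
    exact ((Commute.one_left _).smul_left _).add_left
      ((((Commute.one_right P).smul_right _).add_right (hcomm.smul_right _)).smul_left _)
  · have hsin (θ : ℝ) (hθ : ¬ ∃ k : ℤ, θ = 2 * Real.pi * k) :
        -Complex.sin (θ / 2) * Complex.I ≠ 0 :=
      mul_ne_zero (neg_ne_zero.mpr (Complex.sin_ofReal_div_two_ne_zero hθ)) Complex.I_ne_zero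
    simp only [smul_one_add_smul_mul_eq_smul_mul_iff hP2 hQ2 hanti (hsin θ₁ hθ₁) (hsin θ₂ hθ₂),
      Complex.cos_ofReal_div_two_eq_zero_iff, ← commute_iff_eq,
      not_commute_of_anticommute ℂ hP2 hQ2 hanti, false_or]
    exact ⟨fun ⟨_, _, _, h⟩ => h, fun h => ⟨-1, by simp, rfl, h⟩⟩
end

section
/- Let P₀,…,P_{m−1} be a sequence of Pauli products, let A be the associated commutativity matrix (A_{i,j} = 1 iff Pᵢ anticommutes with Pⱼ, for i < j; A is strictly upper triangular), and let v be the rank vector of A. Let i < j. If Pᵢ commutes with P_k for every k with i < k ≤ j and v_k = 1, then Pᵢ commutes with P_k for every k with i < k ≤ j. -/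
open Matrix Finset

/-- The rank of the submatrix formed by the first `k` columns of `A`. -/
noncomputable def firstColsRank {m : ℕ} (A : Matrix (Fin m) (Fin m) (ZMod 2)) (k : ℕ) : ℕ :=
  (A.submatrix id (fun j : Fin (min k m) => Fin.castLE (min_le_right k m) j)).rank

/-- The rank vector of `A` : `v 0 = 0` and for `i ≥ 1`, `v i = 1` iff appending column `i`
increases the rank of the matrix formed by the first `i` columns. -/
noncomputable def rankVector {m : ℕ} (A : Matrix (Fin m) (Fin m) (ZMod 2)) : Fin m → ZMod 2 :=
  fun i => if i.val = 0 then 0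
    else if firstColsRank A i.val < firstColsRank A (i.val + 1) then 1 else 0

/-!
Strong induction on `k`. If `v k = 0`, column `k` of `A` lies in the span of the columns
`ℓ < k`, so `A i k = 0` as soon as row `i` of each of them vanishes: for `ℓ ≤ i` by
triangularity, and for `i < ℓ < k` because `P i` commutes with `P ℓ` by induction.
-/

lemma firstColsRank_eq_finrank_span {m : ℕ} (A : Matrix (Fin m) (Fin m) (ZMod 2)) (k : ℕ) :
    firstColsRank A k =
      Module.finrank (ZMod 2) (Submodule.span (ZMod 2) (A.col '' {ℓ : Fin m | ℓ.val < k})) := by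
  have hcols :
      Set.range (A.submatrix id fun j : Fin (min k m) => Fin.castLE (min_le_right k m) j).col =
        A.col '' {ℓ : Fin m | ℓ.val < k} := by
    ext x
    constructor
    · rintro ⟨ℓ, rfl⟩
      exact ⟨Fin.castLE (min_le_right k m) ℓ, lt_of_lt_of_le ℓ.2 (min_le_left k m), rfl⟩
    · rintro ⟨ℓ, hℓ, rfl⟩
      exact ⟨⟨ℓ.val, lt_min hℓ ℓ.2⟩, rfl⟩
  rw [firstColsRank, rank_eq_finrank_span_cols, hcols]

lemma col_mem_span_cols_lt_of_rankVector_ne_one {m : ℕ} (A : Matrix (Fin m) (Fin m) (ZMod 2))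
    {k : Fin m} (hk : k.val ≠ 0) (hv : rankVector A k ≠ 1) :
    A.col k ∈ Submodule.span (ZMod 2) (A.col '' {ℓ : Fin m | ℓ < k}) := by
  have hrank : firstColsRank A (k.val + 1) ≤ firstColsRank A k.val := by
    by_contra! h
    exact hv (by simp [rankVector, hk, h])
  rw [firstColsRank_eq_finrank_span, firstColsRank_eq_finrank_span] at hrank
  have hmono : {ℓ : Fin m | ℓ.val < k.val} ⊆ {ℓ : Fin m | ℓ.val < k.val + 1} :=
    fun ℓ (hℓ : ℓ.val < k.val) => Nat.lt_succ_of_lt hℓ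
  have hspan := Submodule.eq_of_le_of_finrank_le (Submodule.span_mono (Set.image_mono hmono)) hrank
  exact hspan ▸ Submodule.subset_span ⟨k, Nat.lt_succ_self _, rfl⟩

lemma entry_eq_zero_of_rankVector_ne_one {m : ℕ} (A : Matrix (Fin m) (Fin m) (ZMod 2))
    (i : Fin m) {k : Fin m} (hk : k.val ≠ 0) (hv : rankVector A k ≠ 1)
    (hzero : ∀ ℓ < k, A i ℓ = 0) : A i k = 0 := by
  have hle : Submodule.span (ZMod 2) (A.col '' {ℓ : Fin m | ℓ < k}) ≤
      LinearMap.ker (LinearMap.proj i) :=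
    Submodule.span_le.2 (by rintro _ ⟨ℓ, hℓ, rfl⟩; exact hzero ℓ hℓ)
  exact hle (col_mem_span_cols_lt_of_rankVector_ne_one A hk hv)

theorem stmt10_general {n m : ℕ} (P : Fin m → (Fin n → Fin 4))
    (A : Matrix (Fin m) (Fin m) (ZMod 2))
    (hTri : ∀ i j : Fin m, j ≤ i → A i j = 0)
    (hA : ∀ i j : Fin m, i < j →
      (A i j = 1 ↔ pauliTensor (P i) * pauliTensor (P j) ≠ pauliTensor (P j) * pauliTensor (P i)))
    (i j : Fin m)
    (hcomm : ∀ k : Fin m, i < k → k ≤ j → rankVector A k = 1 →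
      pauliTensor (P i) * pauliTensor (P k) = pauliTensor (P k) * pauliTensor (P i)) :
    ∀ k : Fin m, i < k → k ≤ j →
      pauliTensor (P i) * pauliTensor (P k) = pauliTensor (P k) * pauliTensor (P i) := by
  have hcomm_iff : ∀ ℓ, i < ℓ →
      (pauliTensor (P i) * pauliTensor (P ℓ) = pauliTensor (P ℓ) * pauliTensor (P i) ↔
        A i ℓ = 0) := by
    have zmod_two_ne_one_iff : ∀ x : ZMod 2, x ≠ 1 ↔ x = 0 := by decide
    exact fun ℓ hℓ => (not_iff_comm.1 (hA i ℓ hℓ).symm).symm.trans (zmod_two_ne_one_iff _)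
  intro k
  induction k using WellFoundedLT.induction with
  | _ k ih =>
  intro hik hkj
  by_cases hv : rankVector A k = 1
  · exact hcomm k hik hkj hv
  refine (hcomm_iff k hik).2
    (entry_eq_zero_of_rankVector_ne_one A i (by omega) hv fun ℓ hℓk => ?_)
  rcases le_or_gt ℓ i with hℓi | hiℓ
  · exact hTri i ℓ hℓi
  · exact (hcomm_iff ℓ hiℓ).1 (ih ℓ hℓk hiℓ (hℓk.le.trans hkj))

theorem stmt10 {n m : ℕ} (P : Fin m → (Fin n → Fin 4))
    (A : Matrix (Fin m) (Fin m) (ZMod 2))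
    (hTri : ∀ i j : Fin m, j ≤ i → A i j = 0)
    (hA : ∀ i j : Fin m, i < j →
      (A i j = 1 ↔ pauliTensor (P i) * pauliTensor (P j) ≠ pauliTensor (P j) * pauliTensor (P i)))
    (i j : Fin m) (hij : i < j)
    (hcomm : ∀ k : Fin m, i < k → k ≤ j → rankVector A k = 1 →
      pauliTensor (P i) * pauliTensor (P k) = pauliTensor (P k) * pauliTensor (P i)) :
    ∀ k : Fin m, i < k → k ≤ j →
      pauliTensor (P i) * pauliTensor (P k) = pauliTensor (P k) * pauliTensor (P i) :=
  stmt10_general P A hTri hA i j hcomm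
end
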